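/- For every Boolean function f : {0,1}^n → {0,1}, the non-adaptive monotone certificate complexity equals the non-adaptive monotone decision tree height: C_m^na(f) = DT_m^na(f), and both equal alt(f). -/

import Mathlib

def altGe {n : ℕ} (f : (Fin n → Bool) → Bool) (k : ℕ) : Prop :=
  ∃ x : Fin (k + 1) → (Fin n → Bool), StrictMono x ∧
    ∀ i : Fin k, f (x i.castSucc) ≠ f (x i.succ)

/-- `alt f` is the maximum number of value changes of `f` along any chain. -/
noncomputable def alt {n : ℕ} (f : (Fin n → Bool) → Bool) : ℕ :=
  sSup {k | altGe f k}

/-- Non-adaptive monotone certificate complexity of f. -/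
noncomputable def Cmna {n : ℕ} (f : (Fin n → Bool) → Bool) : ℕ :=
  sInf {k | ∃ fs : Fin k → (Fin n → Bool) → Bool,
    (∀ i, Monotone (fs i)) ∧ ∀ x y, (∀ i, fs i x = fs i y) → f x = f y}

/-- Minimum height of a non-adaptive monotone decision tree computing f. -/
noncomputable def DTmna {n : ℕ} (f : (Fin n → Bool) → Bool) : ℕ :=
  sInf {k | ∃ (fs : Fin k → (Fin n → Bool) → Bool) (g : (Fin k → Bool) → Bool),
    (∀ i, Monotone (fs i)) ∧ ∀ x, f x = g (fun i => fs i x)}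

def wt {n : ℕ} (x : Fin n → Bool) : ℕ := (Finset.univ.filter (fun i => x i = true)).card

lemma lt_iff_bool {n : ℕ} {a b : Fin n → Bool} (h : a < b) :
    a ≤ b ∧ ∃ i, a i = false ∧ b i = true := by
  refine ⟨h.1, ?_⟩
  by_contra hc
  push_neg at hc
  apply h.2
  intro i
  cases ha : a i with
  | false =>
    cases hb : b i with
    | false => simp
    | true => exact absurd hb (hc i ha)
  | true => exact Bool.le_true _

lemma wt_strictMono {n : ℕ} : StrictMono (wt (n := n)) := by
  intro a b hab
  obtain ⟨hle, i, hai, hbi⟩ := lt_iff_bool hab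
  apply Finset.card_lt_card
  rw [Finset.ssubset_iff_of_subset]
  · exact ⟨i, by simp [hbi], by simp [hai]⟩
  · intro j hj
    simp only [Finset.mem_filter, Finset.mem_univ, true_and] at *
    have := hle j
    rw [hj] at this
    exact Bool.eq_true_of_true_le this

lemma wt_le {n : ℕ} (x : Fin n → Bool) : wt x ≤ n := by
  have := Finset.card_filter_le (Finset.univ : Finset (Fin n)) (fun i => x i = true)
  simpa [wt] using this

lemma chain_le {n k : ℕ} (c : Fin (k+1) → (Fin n → Bool)) (h : StrictMono c) : k ≤ n := by
  have key : ∀ i : Fin (k+1), (i : ℕ) ≤ wt (c i) := by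
    intro i
    induction i using Fin.induction with
    | zero => simp
    | succ j ih =>
      have := wt_strictMono (h (Fin.castSucc_lt_succ : j.castSucc < j.succ))
      simp only [Fin.coe_castSucc] at ih
      simp only [Fin.val_succ]
      omega
  have := key (Fin.last k)
  simp at this
  exact this.trans (wt_le _)

lemma strictMono_snoc {m : ℕ} {α : Type*} [Preorder α] {d : Fin m → α} {y : α}
    (hd : StrictMono d) (hy : ∀ i, d i < y) : StrictMono (Fin.snoc d y : Fin (m+1) → α) := by
  rw [Fin.strictMono_iff_lt_succ]
  intro i
  rcases Fin.eq_castSucc_or_eq_last i.succ with ⟨j, hj⟩ | hj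
  · rw [Fin.snoc_castSucc, hj, Fin.snoc_castSucc]
    apply hd
    have : i.castSucc < j.castSucc := by rw [← hj]; exact Fin.castSucc_lt_succ
    exact_mod_cast this
  · rw [Fin.snoc_castSucc, hj, Fin.snoc_last]
    exact hy i

/-- there is an alternating chain of length k ending at x -/
def altChainTo {n : ℕ} (f : (Fin n → Bool) → Bool) (x : Fin n → Bool) (k : ℕ) : Prop :=
  ∃ c : Fin (k + 1) → (Fin n → Bool), StrictMono c ∧ c (Fin.last k) = x ∧
    ∀ i : Fin k, f (c i.castSucc) ≠ f (c i.succ)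

noncomputable def chainA {n : ℕ} (f : (Fin n → Bool) → Bool) (x : Fin n → Bool) : ℕ :=
  sSup {k | altChainTo f x k}

lemma altChainTo_zero {n : ℕ} (f : (Fin n → Bool) → Bool) (x : Fin n → Bool) :
    altChainTo f x 0 := by
  refine ⟨fun _ => x, ?_, rfl, by intro i; exact i.elim0⟩
  intro a b hab
  have := a.isLt
  have := b.isLt
  rw [Fin.lt_def] at hab
  omega

lemma altChainTo_le {n : ℕ} {f : (Fin n → Bool) → Bool} {x : Fin n → Bool} {k : ℕ}
    (h : altChainTo f x k) : k ≤ n := by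
  obtain ⟨c, hc, -, -⟩ := h
  exact chain_le c hc

lemma altGe_le {n : ℕ} {f : (Fin n → Bool) → Bool} {k : ℕ} (h : altGe f k) : k ≤ n := by
  obtain ⟨c, hc, -⟩ := h
  exact chain_le c hc

lemma chainA_mem {n : ℕ} (f : (Fin n → Bool) → Bool) (x : Fin n → Bool) :
    altChainTo f x (chainA f x) :=
  Nat.sSup_mem ⟨0, by exact altChainTo_zero f x⟩ ⟨n, fun _ hk => altChainTo_le hk⟩

lemma le_chainA {n : ℕ} {f : (Fin n → Bool) → Bool} {x : Fin n → Bool} {k : ℕ}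
    (h : altChainTo f x k) : k ≤ chainA f x :=
  le_csSup ⟨n, fun _ hk => altChainTo_le hk⟩ (by exact h)

lemma chainA_mono {n : ℕ} (f : (Fin n → Bool) → Bool) : Monotone (chainA f) := by
  intro x y hxy
  obtain ⟨c, hc, hlast, halt⟩ := chainA_mem f x
  rcases eq_or_lt_of_le hxy with heq | hlt
  · subst heq; exact le_refl _
  by_cases hf : f x = f y
  · -- replace last element by y
    apply le_chainA (k := chainA f x)
    refine ⟨Fin.snoc (fun i : Fin (chainA f x) => c i.castSucc) y, ?_, by simp, ?_⟩
    · apply strictMono_snoc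
      · intro a b hab
        exact hc (Fin.castSucc_lt_castSucc_iff.mpr hab)
      · intro i
        calc c i.castSucc < c (Fin.last _) := hc (Fin.castSucc_lt_last i)
        _ = x := hlast
        _ < y := hlt
        _ ≤ y := le_refl _
    · intro i
      rw [Fin.snoc_castSucc]
      rcases Fin.eq_castSucc_or_eq_last i.succ with ⟨j, hj⟩ | hj
      · rw [hj, Fin.snoc_castSucc, ← hj]
        exact halt i
      · rw [hj, Fin.snoc_last]
        have h2 := halt i
        rw [hj, hlast, hf] at h2
        exact h2
  · -- extend chain by appending y
    have hk1 : altChainTo f y (chainA f x + 1) := by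
      refine ⟨Fin.snoc c y, ?_, by simp, ?_⟩
      · apply strictMono_snoc hc
        intro i
        calc c i ≤ c (Fin.last _) := hc.monotone (Fin.le_last i)
        _ = x := hlast
        _ < y := hlt
      · intro i
        induction i using Fin.lastCases with
        | last =>
          rw [Fin.snoc_castSucc, Fin.succ_last, Fin.snoc_last, hlast]
          exact hf
        | cast j =>
          rw [Fin.snoc_castSucc, Fin.succ_castSucc, Fin.snoc_castSucc]
          exact halt j
    exact le_of_lt (lt_of_lt_of_le (Nat.lt_succ_self _) (le_chainA hk1))

lemma strictMono_cons {m : ℕ} {α : Type*} [Preorder α] {d : Fin (m+1) → α} {b : α}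
    (hd : StrictMono d) (hb : b < d 0) : StrictMono (Fin.cons b d : Fin (m+2) → α) := by
  rw [Fin.strictMono_iff_lt_succ]
  intro i
  induction i using Fin.cases with
  | zero => simpa using hb
  | succ j =>
    rw [← Fin.succ_castSucc, Fin.cons_succ, Fin.cons_succ]
    exact hd (Fin.castSucc_lt_succ : j.castSucc < j.succ)

lemma chain_parity {n m : ℕ} (f : (Fin n → Bool) → Bool) (c : Fin (m+1) → Fin n → Bool)
    (halt : ∀ i : Fin m, f (c i.castSucc) ≠ f (c i.succ)) :
    ∀ i : Fin (m+1), f (c i) = xor (f (c 0)) (decide ((i : ℕ) % 2 = 1)) := by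
  intro i
  induction i using Fin.induction with
  | zero => simp
  | succ j ih =>
    have h1 := halt j
    rw [ih] at h1
    simp only [Fin.coe_castSucc] at h1
    simp only [Fin.val_succ]
    have hpar : ((j : ℕ) + 1) % 2 = 1 ↔ ¬ ((j : ℕ) % 2 = 1) := by omega
    by_cases hj : (j : ℕ) % 2 = 1 <;>
      [skip; skip] <;>
      simp [hj, hpar] at h1 ⊢ <;>
      revert h1 <;>
      cases (f (c 0)) <;> cases (f (c j.succ)) <;> simp

def bbot (n : ℕ) : Fin n → Bool := fun _ => false

lemma f_parity {n : ℕ} (f : (Fin n → Bool) → Bool) (x : Fin n → Bool) :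
    f x = xor (f (bbot n)) (decide (chainA f x % 2 = 1)) := by
  obtain ⟨c, hc, hlast, halt⟩ := chainA_mem f x
  have hpar := chain_parity f c halt (Fin.last _)
  rw [hlast] at hpar
  by_cases h0 : f (c 0) = f (bbot n)
  · rw [hpar, h0]; simp
  · -- c 0 ≠ bbot, prepend bbot to get longer chain, contradiction
    exfalso
    have hne : c 0 ≠ bbot n := fun h => h0 (by rw [h])
    have hbot_lt : bbot n < c 0 := by
      constructor
      · intro i; simp [bbot]
      · intro h
        apply hne
        apply le_antisymm h
        intro i; simp [bbot]
    have hlonger : altChainTo f x (chainA f x + 1) := by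
      refine ⟨Fin.cons (bbot n) c, strictMono_cons hc hbot_lt, ?_, ?_⟩
      · rw [← Fin.succ_last, Fin.cons_succ, hlast]
      · intro i
        induction i using Fin.cases with
        | zero =>
          simpa using fun h => h0 h.symm
        | succ j =>
          rw [← Fin.succ_castSucc, Fin.cons_succ, Fin.cons_succ]
          exact halt j
    exact absurd (le_chainA hlonger) (by omega)

lemma altGe_zero {n : ℕ} (f : (Fin n → Bool) → Bool) : altGe f 0 := by
  refine ⟨fun _ => bbot n, ?_, by intro i; exact i.elim0⟩
  intro a b hab
  have := a.isLt
  have := b.isLt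
  rw [Fin.lt_def] at hab
  omega

lemma alt_mem {n : ℕ} (f : (Fin n → Bool) → Bool) : altGe f (alt f) :=
  Nat.sSup_mem ⟨0, by exact altGe_zero f⟩ ⟨n, fun _ hk => altGe_le hk⟩

lemma le_alt {n : ℕ} {f : (Fin n → Bool) → Bool} {k : ℕ} (h : altGe f k) : k ≤ alt f :=
  le_csSup ⟨n, fun _ hk => altGe_le hk⟩ (by exact h)

lemma chainA_le_alt {n : ℕ} (f : (Fin n → Bool) → Bool) (x : Fin n → Bool) :
    chainA f x ≤ alt f := by
  obtain ⟨c, hc, -, halt⟩ := chainA_mem f x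
  exact le_alt ⟨c, hc, halt⟩

lemma card_filter_lt {m a : ℕ} (ha : a ≤ m) :
    (Finset.univ.filter (fun j : Fin m => (j : ℕ) < a)).card = a := by
  rcases eq_or_lt_of_le ha with rfl | h
  · have : (Finset.univ.filter (fun j : Fin a => (j : ℕ) < a)) = Finset.univ := by
      ext j; simp [j.isLt]
    rw [this, Finset.card_univ, Fintype.card_fin]
  · have : (Finset.univ.filter (fun j : Fin m => (j : ℕ) < a)) = Finset.Iio (⟨a, h⟩ : Fin m) := by
      ext j; simp [Fin.lt_def]
    rw [this, Fin.card_Iio]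

lemma alt_le_of_dt {n k : ℕ} {f : (Fin n → Bool) → Bool}
    (fs : Fin k → (Fin n → Bool) → Bool) (g : (Fin k → Bool) → Bool)
    (hmono : ∀ i, Monotone (fs i)) (hrep : ∀ x, f x = g (fun i => fs i x))
    {m : ℕ} (hm : altGe f m) : m ≤ k := by
  obtain ⟨x, hx, halt⟩ := hm
  have key : ∀ i : Fin m, ∃ j : Fin k,
      fs j (x i.castSucc) = false ∧ fs j (x i.succ) = true := by
    intro i
    have hne := halt i
    rw [hrep, hrep] at hne
    have : ¬ ∀ j, fs j (x i.castSucc) = fs j (x i.succ) := by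
      intro hall
      apply hne
      congr 1
      funext j
      exact hall j
    push_neg at this
    obtain ⟨j, hj⟩ := this
    refine ⟨j, ?_⟩
    have hle := hmono j (hx (Fin.castSucc_lt_succ : i.castSucc < i.succ)).le
    cases h1 : fs j (x i.castSucc) with
    | false =>
      cases h2 : fs j (x i.succ) with
      | false => exact absurd (h1.trans h2.symm) hj
      | true => exact ⟨rfl, rfl⟩
    | true =>
      rw [h1] at hle
      have := Bool.eq_true_of_true_le hle
      exact absurd (h1.trans this.symm) hj
  choose φ hφ1 hφ2 using key
  have hinj : Function.Injective φ := by
    intro i₁ i₂ h12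
    by_contra hne
    rcases Ne.lt_or_gt hne with hlt | hlt
    · have hle : x i₁.succ ≤ x i₂.castSucc := by
        apply hx.monotone
        rw [Fin.le_def]
        simp only [Fin.val_succ, Fin.coe_castSucc]
        exact hlt
      have := hmono (φ i₁) hle
      rw [hφ2 i₁, h12, hφ1 i₂] at this
      exact absurd this (by simp)
    · have hle : x i₂.succ ≤ x i₁.castSucc := by
        apply hx.monotone
        rw [Fin.le_def]
        simp only [Fin.val_succ, Fin.coe_castSucc]
        exact hlt
      have := hmono (φ i₂) hle
      rw [hφ2 i₂, ← h12, hφ1 i₁] at this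
      exact absurd this (by simp)
  simpa using Fintype.card_le_of_injective φ hinj

lemma dt_witness {n : ℕ} (f : (Fin n → Bool) → Bool) :
    ∃ (fs : Fin (alt f) → (Fin n → Bool) → Bool) (g : (Fin (alt f) → Bool) → Bool),
      (∀ i, Monotone (fs i)) ∧ ∀ x, f x = g (fun i => fs i x) := by
  refine ⟨fun j x => decide ((j : ℕ) < chainA f x),
    fun b => xor (f (bbot n)) (decide ((Finset.univ.filter (fun j => b j = true)).card % 2 = 1)),
    ?_, ?_⟩
  · intro j x y hxy
    have := chainA_mono f hxy
    by_cases h : (j : ℕ) < chainA f x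
    · have h2 : (j : ℕ) < chainA f y := lt_of_lt_of_le h this
      simp [h, h2]
    · simp [h]
  · intro x
    have hcard : (Finset.univ.filter
        (fun j : Fin (alt f) => decide ((j : ℕ) < chainA f x) = true)).card = chainA f x := by
      have he : (Finset.univ.filter (fun j : Fin (alt f) => decide ((j : ℕ) < chainA f x) = true))
          = (Finset.univ.filter (fun j : Fin (alt f) => (j : ℕ) < chainA f x)) := by
        ext j; simp
      rw [he, card_filter_lt (chainA_le_alt f x)]
    beta_reduce
    rw [hcard]
    exact f_parity f x

/-- C_m^na(f) = DT_m^na(f) = alt(f). -/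
theorem cmna_eq_dtmna_eq_alt (n : ℕ) (f : (Fin n → Bool) → Bool) :
    Cmna f = DTmna f ∧ DTmna f = alt f := by
  have hset : {k | ∃ fs : Fin k → (Fin n → Bool) → Bool,
      (∀ i, Monotone (fs i)) ∧ ∀ x y, (∀ i, fs i x = fs i y) → f x = f y} =
      {k | ∃ (fs : Fin k → (Fin n → Bool) → Bool) (g : (Fin k → Bool) → Bool),
      (∀ i, Monotone (fs i)) ∧ ∀ x, f x = g (fun i => fs i x)} := by
    ext k
    constructor
    · rintro ⟨fs, hmono, hcert⟩
      classical
      refine ⟨fs, fun b => if h : ∃ x, (fun i => fs i x) = b then f h.choose else false,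
        hmono, ?_⟩
      intro x
      have hex : ∃ y, (fun i => fs i y) = (fun i => fs i x) := ⟨x, rfl⟩
      beta_reduce
      rw [dif_pos hex]
      apply hcert
      intro i
      exact (congrFun hex.choose_spec i).symm
    · rintro ⟨fs, g, hmono, hrep⟩
      refine ⟨fs, hmono, ?_⟩
      intro x y h
      rw [hrep x, hrep y]
      congr 1
      funext i
      exact h i
  have hmem : (alt f) ∈ {k | ∃ (fs : Fin k → (Fin n → Bool) → Bool)
      (g : (Fin k → Bool) → Bool),
      (∀ i, Monotone (fs i)) ∧ ∀ x, f x = g (fun i => fs i x)} := dt_witness f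
  have hdt_alt : DTmna f = alt f := by
    apply le_antisymm
    · exact Nat.sInf_le hmem
    · apply le_csInf ⟨alt f, hmem⟩
      rintro k ⟨fs, g, hmono, hrep⟩
      exact alt_le_of_dt fs g hmono hrep (alt_mem f)
  refine ⟨?_, hdt_alt⟩
  unfold Cmna DTmna
  rw [hset]
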